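/- The number of parking quasi-ribbons of size n (segmented nondecreasing parking functions, i.e. nondecreasing parking functions of length n with bars allowed only between strictly different consecutive values) equals the number of Schröder trees with n+1 leaves (the little Schröder number). -/

import Mathlib

noncomputable section

/-- Schröder trees: rooted plane trees in which every internal vertex has at least two
children. -/
inductive STree where
  | leaf : STree
  | node (a b : STree) (l : List STree) : STree

mutual
  /-- Number of leaves of a Schröder tree. -/
  def leavesT : STree → ℕ
    | .leaf => 1
    | .node a b l => leavesT a + leavesT b + leavesL l
  def leavesL : List STree → ℕ
    | [] => 0
    | t :: ts => leavesT t + leavesL ts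
end

/-- A nondecreasing parking function of length `n`. -/
def IsNDPF (n : ℕ) (w : List ℕ) : Prop :=
  w.length = n ∧ List.Pairwise (· ≤ ·) w ∧
    ∀ i, i < w.length → 1 ≤ w.getD i 0 ∧ w.getD i 0 ≤ i + 1

/-- A parking quasi-ribbon of size `n`: a nondecreasing parking function of length `n`
together with a set of bar positions, each bar placed between two consecutive positions
carrying strictly different values. -/
def IsPQR (n : ℕ) (w : List ℕ) (B : Finset ℕ) : Prop :=
  IsNDPF n w ∧ ∀ i ∈ B, i + 1 < w.length ∧ w.getD i 0 < w.getD (i + 1) 0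

/-! Both counts obey the same quadratic recursion up to a symmetry. A Schröder tree `node a b l` is
determined by its first subtree `a`, the tree `r` formed by the remaining children (`b` itself
if `l = []`, else `node b c l'`) and a bit saying which case occurred; the bit can be set only
when `r` is not a leaf. A parking quasi-ribbon `w` of size `n + 1` splits at its last position
`a` with `w_a = a + 1`: the prefix is a ribbon of size `a`, the suffix lowered by `a` is a
ribbon of size `n - a` (its entries stay below the diagonal because no later position is tight),
and the one remaining datum is a possible bar just before position `a`, which needs `a > 0`.
Writing `t n` for the number of trees with `n + 1` leaves and `p n` for the number of ribbons of
size `n`, we get `t (n + 1) = ∑_{i+k=n} t i * t k * (1 + [k > 0])` and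
`p (n + 1) = ∑_{i+k=n} p i * p k * (1 + [i > 0])`, which agree after swapping `i` and `k`. -/

open Finset Function

structure IsJoinDecomposition {α : Type*} (P : ℕ → α → Prop) (ok : ℕ → ℕ → Bool → Prop)
    (join : α → α → Bool → α) : Prop where
  grade_unique : ∀ {i j a}, P i a → P j a → i = j
  mem_join : ∀ {i k a b f}, P i a → P k b → ok i k f → P (i + k + 1) (join a b f)
  join_inj : ∀ {i k i' k' a b f a' b' f'}, P i a → P k b → ok i k f → P i' a' → P k' b' →
    ok i' k' f' → join a b f = join a' b' f' → a = a' ∧ b = b' ∧ f = f'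
  exists_join : ∀ {n z}, P (n + 1) z →
    ∃ i k a b f, i + k = n ∧ P i a ∧ P k b ∧ ok i k f ∧ join a b f = z

namespace IsJoinDecomposition

variable {α : Type*} {P : ℕ → α → Prop} {ok : ℕ → ℕ → Bool → Prop} {join : α → α → Bool → α}

abbrev JoinData (P : ℕ → α → Prop) (ok : ℕ → ℕ → Bool → Prop) (n : ℕ) :=
  Σ x : antidiagonal n, {a // P x.1.1 a} × {b // P x.1.2 b} × {f // ok x.1.1 x.1.2 f}

def sigmaJoin (h : IsJoinDecomposition P ok join) (n : ℕ) : JoinData P ok n → {z // P (n + 1) z} :=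
  fun ⟨x, a, b, f⟩ => ⟨join a b f, by
    simpa only [mem_antidiagonal.1 x.2] using h.mem_join a.2 b.2 f.2⟩

theorem bijective_sigmaJoin (h : IsJoinDecomposition P ok join) (n : ℕ) :
    Bijective (h.sigmaJoin n) := by
  constructor
  · rintro ⟨⟨⟨i, k⟩, _⟩, ⟨a, ha⟩, ⟨b, hb⟩, ⟨f, hf⟩⟩ ⟨⟨⟨i', k'⟩, _⟩, ⟨a', ha'⟩, ⟨b', hb'⟩, ⟨f', hf'⟩⟩
      heq
    obtain ⟨rfl, rfl, rfl⟩ := h.join_inj ha hb hf ha' hb' hf' (congrArg Subtype.val heq)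
    obtain rfl := h.grade_unique ha ha'
    obtain rfl := h.grade_unique hb hb'
    rfl
  · rintro ⟨z, hz⟩
    obtain ⟨i, k, a, b, f, hik, ha, hb, hf, rfl⟩ := h.exists_join hz
    exact ⟨⟨⟨(i, k), mem_antidiagonal.2 hik⟩, ⟨a, ha⟩, ⟨b, hb⟩, ⟨f, hf⟩⟩, rfl⟩

theorem finite (h : IsJoinDecomposition P ok join) [Finite {a // P 0 a}] (n : ℕ) :
    Finite {a // P n a} := by
  induction n using Nat.strong_induction_on with
  | _ n ih =>
    cases n with
    | zero => infer_instance
    | succ n =>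
      have (x : antidiagonal n) : Finite {a // P x.1.1 a} :=
        ih _ (by have := mem_antidiagonal.1 x.2; omega)
      have (x : antidiagonal n) : Finite {b // P x.1.2 b} :=
        ih _ (by have := mem_antidiagonal.1 x.2; omega)
      exact Finite.of_surjective _ (h.bijective_sigmaJoin n).2

theorem card_succ (h : IsJoinDecomposition P ok join) [Finite {a // P 0 a}] (n : ℕ) :
    Nat.card {z // P (n + 1) z} = ∑ x ∈ antidiagonal n,
      Nat.card {a // P x.1 a} * Nat.card {b // P x.2 b} * Nat.card {f // ok x.1 x.2 f} := by
  have := h.finite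
  rw [← Nat.card_eq_of_bijective _ (h.bijective_sigmaJoin n), Nat.card_sigma,
    ← sum_coe_sort (antidiagonal n)]
  simp only [Nat.card_prod, mul_assoc]

end IsJoinDecomposition

namespace STree

theorem one_le_leavesT : ∀ t, 1 ≤ leavesT t
  | leaf => le_rfl
  | node a b l => by
    have := one_le_leavesT a
    rw [leavesT]
    omega

theorem leavesT_eq_one_iff {t : STree} : leavesT t = 1 ↔ t = leaf := by
  cases t with
  | leaf => simp [leavesT]
  | node a b l =>
    have := one_le_leavesT a
    have := one_le_leavesT b
    simp only [leavesT, reduceCtorEq, iff_false]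
    omega

theorem two_le_leavesT_iff {t : STree} : 2 ≤ leavesT t ↔ t ≠ leaf := by
  rw [Ne, ← leavesT_eq_one_iff]
  have := one_le_leavesT t
  omega

theorem card_leavesT_eq_one : Nat.card {t // leavesT t = 1} = 1 := by
  simp [leavesT_eq_one_iff]

def join : STree → STree → Bool → STree
  | a, r, false => node a r []
  | a, node b c l, true => node a b (c :: l)
  | _, leaf, true => leaf

theorem leavesT_join (a r : STree) {f : Bool} (hf : f = true → r ≠ leaf) :
    leavesT (join a r f) = leavesT a + leavesT r := by
  cases f <;> cases r <;> simp_all [join, leavesT, leavesL]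
  omega

theorem join_inj {a r a' r' : STree} {f f' : Bool} (hf : f = true → r ≠ leaf)
    (hf' : f' = true → r' ≠ leaf) (h : join a r f = join a' r' f') :
    a = a' ∧ r = r' ∧ f = f' := by
  cases f <;> cases f' <;> cases r <;> cases r' <;> simp_all [join]

theorem exists_join {t : STree} (ht : t ≠ leaf) :
    ∃ a r f, (f = true → r ≠ leaf) ∧ join a r f = t := by
  match t, ht with
  | node a b [], _ => exact ⟨a, b, false, by simp, rfl⟩
  | node a b (c :: l), _ => exact ⟨a, node b c l, true, by simp, rfl⟩

theorem isJoinDecomposition :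
    IsJoinDecomposition (fun n t => leavesT t = n + 1) (fun _ k f => f = true → 1 ≤ k) join where
  grade_unique h h' := by omega
  mem_join {i k a b f} ha hb hf := by
    rw [leavesT_join a b fun hf' => two_le_leavesT_iff.1 (by have := hf hf'; omega)]
    omega
  join_inj _ _ hf _ _ hf' h :=
    join_inj (fun h => two_le_leavesT_iff.1 (by have := hf h; omega))
      (fun h => two_le_leavesT_iff.1 (by have := hf' h; omega)) h
  exists_join {n t} ht := by
    obtain ⟨a, r, f, hf, rfl⟩ := exists_join (t := t) (by rintro rfl; simp [leavesT] at ht)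
    have := one_le_leavesT a
    have := one_le_leavesT r
    rw [leavesT_join a r hf] at ht
    exact ⟨leavesT a - 1, leavesT r - 1, a, r, f, by omega, by omega, by omega,
      fun h => by have := two_le_leavesT_iff.2 (hf h); omega, rfl⟩

end STree

theorem List.getD_take_of_lt {α : Type*} {l : List α} {m i : ℕ} {d : α} (h : i < m) :
    (l.take m).getD i d = l.getD i d := by
  simp [List.getD_eq_getElem?_getD, h]

theorem List.getD_drop {α : Type*} (l : List α) (m i : ℕ) (d : α) :
    (l.drop m).getD i d = l.getD (m + i) d := by
  simp [List.getD_eq_getElem?_getD]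

theorem List.getD_map_sub (l : List ℕ) (m i : ℕ) : (l.map (· - m)).getD i 0 = l.getD i 0 - m := by
  simp only [List.getD_eq_getElem?_getD, List.getElem?_map]
  cases l[i]? <;> simp

theorem IsNDPF.getD_bounds {n : ℕ} {w : List ℕ} (h : IsNDPF n w) {i : ℕ} (hi : i < n) :
    1 ≤ w.getD i 0 ∧ w.getD i 0 ≤ i + 1 :=
  h.2.2 i (h.1 ▸ hi)

theorem IsNDPF.mem_bounds {n : ℕ} {w : List ℕ} (h : IsNDPF n w) {x : ℕ} (hx : x ∈ w) :
    1 ≤ x ∧ x ≤ n := by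
  obtain ⟨i, hi, rfl⟩ := List.mem_iff_getElem.1 hx
  have := h.2.2 i hi
  rw [List.getD_eq_getElem _ _ hi] at this
  exact ⟨this.1, by have := h.1; omega⟩

theorem IsNDPF.getD_mono {n : ℕ} {w : List ℕ} (h : IsNDPF n w) {i j : ℕ} (hij : i ≤ j)
    (hj : j < n) : w.getD i 0 ≤ w.getD j 0 := by
  rw [List.getD_eq_getElem _ _ (by rw [h.1]; omega), List.getD_eq_getElem _ _ (by rw [h.1]; omega)]
  rcases hij.lt_or_eq with hij | rfl
  · exact List.pairwise_iff_getElem.1 h.2.1 _ _ _ _ hij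
  · rfl

def wordJoin (u v : List ℕ) : List ℕ := u ++ (u.length + 1) :: v.map (· + u.length)

def barJoin (a : ℕ) (S T : Finset ℕ) (f : Bool) : Finset ℕ :=
  S ∪ (if f then {a - 1} else ∅) ∪ T.image (· + (a + 1))

def pqrJoin (p q : List ℕ × Finset ℕ) (f : Bool) : List ℕ × Finset ℕ :=
  (wordJoin p.1 q.1, barJoin p.1.length p.2 q.2 f)

theorem length_wordJoin (u v : List ℕ) : (wordJoin u v).length = u.length + v.length + 1 := by
  simp [wordJoin]; omega

theorem getD_wordJoin_of_lt {u : List ℕ} (v : List ℕ) {i : ℕ} (h : i < u.length) :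
    (wordJoin u v).getD i 0 = u.getD i 0 := by
  simp [wordJoin, List.getD_eq_getElem?_getD, List.getElem?_append, h]

theorem getD_wordJoin_length (u v : List ℕ) : (wordJoin u v).getD u.length 0 = u.length + 1 := by
  simp [wordJoin, List.getD_eq_getElem?_getD]

theorem getD_wordJoin_add {u v : List ℕ} {j : ℕ} (h : j < v.length) :
    (wordJoin u v).getD (u.length + 1 + j) 0 = v.getD j 0 + u.length := by
  simp [wordJoin, List.getD_eq_getElem?_getD, List.getElem?_append, h,
    show u.length + 1 + j - u.length = j + 1 by omega, show ¬u.length + 1 + j < u.length by omega]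

theorem isNDPF_wordJoin {a b : ℕ} {u v : List ℕ} (hu : IsNDPF a u) (hv : IsNDPF b v) :
    IsNDPF (a + b + 1) (wordJoin u v) := by
  have hlen : (wordJoin u v).length = a + b + 1 := by rw [length_wordJoin, hu.1, hv.1]
  refine ⟨hlen, ?_, fun i hi => ?_⟩
  · have hu_le (x) (hx : x ∈ u) : x ≤ a := (hu.mem_bounds hx).2
    have hv_ge (y) (hy : y ∈ v) : 1 ≤ y := (hv.mem_bounds hy).1
    simp only [wordJoin, List.pairwise_append, List.pairwise_cons, List.pairwise_map,
      List.mem_cons, List.mem_map, hu.1]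
    refine ⟨hu.2.1, ⟨fun y ⟨z, hz, hzy⟩ => ?_, hv.2.1.imp (by omega)⟩, ?_⟩
    · have := hv_ge z hz; omega
    · rintro x hx y (rfl | ⟨z, hz, rfl⟩)
      · have := hu_le x hx; omega
      · have := hu_le x hx; have := hv_ge z hz; omega
  · rw [hlen] at hi
    rcases lt_trichotomy i a with hia | rfl | hia
    · rw [getD_wordJoin_of_lt v (hu.1 ▸ hia)]
      exact hu.getD_bounds hia
    · rw [← hu.1, getD_wordJoin_length]
      omega
    · obtain ⟨j, rfl⟩ : ∃ j, i = a + 1 + j := ⟨i - (a + 1), by omega⟩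
      rw [← hu.1, getD_wordJoin_add (hv.1 ▸ (by omega : j < b)), hu.1]
      have := hv.getD_bounds (i := j) (by omega)
      omega

theorem isPQR_join {a b : ℕ} {u v : List ℕ} {S T : Finset ℕ} {f : Bool} (hu : IsPQR a u S)
    (hv : IsPQR b v T) (hf : f = true → 1 ≤ a) :
    IsPQR (a + b + 1) (wordJoin u v) (barJoin u.length S T f) := by
  have hw := isNDPF_wordJoin hu.1 hv.1
  obtain rfl := hu.1.1
  refine ⟨hw, fun i hi => ?_⟩
  rw [hw.1]
  simp only [barJoin, Finset.mem_union, Finset.mem_image] at hi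
  rcases hi with (hiS | hiF) | ⟨j, hjT, rfl⟩
  · obtain ⟨hi, hlt⟩ := hu.2 i hiS
    refine ⟨by omega, ?_⟩
    rwa [getD_wordJoin_of_lt v (by omega), getD_wordJoin_of_lt v hi]
  · obtain ⟨rfl, rfl⟩ : f = true ∧ i = u.length - 1 := by cases f <;> simp_all
    have := hf rfl
    refine ⟨by omega, ?_⟩
    rw [getD_wordJoin_of_lt v (by omega), Nat.sub_add_cancel (by omega), getD_wordJoin_length]
    have := hu.1.getD_bounds (i := u.length - 1) (by omega)
    omega
  · obtain ⟨hj, hlt⟩ := hv.2 j hjT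
    have := hv.1.1
    refine ⟨by omega, ?_⟩
    rw [show j + (u.length + 1) = u.length + 1 + j by omega, getD_wordJoin_add (by omega),
      show u.length + 1 + j + 1 = u.length + 1 + (j + 1) by omega, getD_wordJoin_add (by omega)]
    omega

-- A position `i` is tight when `w_i = i + 1`, the largest value a parking function allows there.
def IsLastTight (n : ℕ) (w : List ℕ) (a : ℕ) : Prop :=
  a ≤ n ∧ w.getD a 0 = a + 1 ∧ ∀ i, a < i → i ≤ n → w.getD i 0 ≤ i

def lastTight (w : List ℕ) : ℕ := Nat.findGreatest (fun i => w.getD i 0 = i + 1) (w.length - 1)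

def pqrSplitAt (a : ℕ) (z : List ℕ × Finset ℕ) :
    (List ℕ × Finset ℕ) × (List ℕ × Finset ℕ) × Bool :=
  ((z.1.take a, z.2.filter (· + 1 < a)),
    ((z.1.drop (a + 1)).map (· - a), (z.2.filter (a < ·)).image (· - (a + 1))),
    decide (1 ≤ a ∧ a - 1 ∈ z.2))

def pqrSplit (z : List ℕ × Finset ℕ) : (List ℕ × Finset ℕ) × (List ℕ × Finset ℕ) × Bool :=
  pqrSplitAt (lastTight z.1) z

theorem lastTight_wordJoin (u : List ℕ) {b : ℕ} {v : List ℕ} (hv : IsNDPF b v) :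
    lastTight (wordJoin u v) = u.length := by
  refine Nat.findGreatest_eq_iff.2 ⟨by rw [length_wordJoin]; omega,
    fun _ => getD_wordJoin_length u v, fun i hi hle => ?_⟩
  obtain ⟨j, rfl⟩ : ∃ j, i = u.length + 1 + j := ⟨i - (u.length + 1), by omega⟩
  rw [length_wordJoin] at hle
  rw [getD_wordJoin_add (by omega)]
  have := hv.getD_bounds (i := j) (by rw [← hv.1]; omega)
  omega

theorem pqrSplitAt_join {a : ℕ} {p : List ℕ × Finset ℕ} (q : List ℕ × Finset ℕ) {f : Bool}
    (hp : IsPQR a p.1 p.2) (hf : f = true → 1 ≤ a) :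
    pqrSplitAt p.1.length (pqrJoin p q f) = (p, q, f) := by
  obtain ⟨u, S⟩ := p
  obtain ⟨v, T⟩ := q
  have hu : IsPQR a u S := hp
  obtain rfl := hu.1.1
  have hS (i) (hi : i ∈ S) : i + 1 < u.length := (hu.2 i hi).1
  simp only [pqrSplitAt, pqrJoin, Prod.mk.injEq]
  refine ⟨⟨List.take_left' rfl, ?_⟩, ⟨?_, ?_⟩, ?_⟩
  · ext i
    simp only [barJoin, Finset.mem_filter, Finset.mem_union, Finset.mem_image]
    constructor
    · rintro ⟨(hi | hi) | ⟨j, -, rfl⟩, hlt⟩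
      · exact hi
      · cases f <;> simp at hi; omega
      · omega
    · exact fun hi => ⟨Or.inl (Or.inl hi), hS i hi⟩
  · simp [wordJoin, List.map_map, Function.comp_def]
  · ext j
    simp only [barJoin, Finset.mem_filter, Finset.mem_union, Finset.mem_image]
    constructor
    · rintro ⟨i, ⟨(hi | hi) | ⟨j', hj', rfl⟩, hlt⟩, rfl⟩
      · have := hS i hi; omega
      · cases f <;> simp at hi; omega
      · simpa using hj'
    · exact fun hj => ⟨j + (u.length + 1), ⟨Or.inr ⟨j, hj, rfl⟩, by omega⟩, by omega⟩
  · cases f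
    · simp only [barJoin, Bool.false_eq_true, reduceIte, Finset.union_empty, Finset.mem_union,
        Finset.mem_image, decide_eq_false_iff_not, not_and, not_or, not_exists]
      exact fun _ => ⟨fun hi => by have := hS _ hi; omega, fun j _ => by omega⟩
    · simpa [barJoin] using hf rfl

theorem pqrSplit_join {a b : ℕ} {p q : List ℕ × Finset ℕ} {f : Bool} (hp : IsPQR a p.1 p.2)
    (hq : IsPQR b q.1 q.2) (hf : f = true → 1 ≤ a) : pqrSplit (pqrJoin p q f) = (p, q, f) := by
  rw [pqrSplit, pqrJoin, lastTight_wordJoin _ hq.1]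
  exact pqrSplitAt_join q hp hf

theorem isLastTight_lastTight {n : ℕ} {w : List ℕ} (hw : IsNDPF (n + 1) w) :
    IsLastTight n w (lastTight w) := by
  have hlen : w.length - 1 = n := by rw [hw.1]; rfl
  have htight0 : w.getD 0 0 = 0 + 1 := by
    have := hw.getD_bounds (i := 0) (by omega)
    omega
  unfold lastTight
  refine ⟨hlen ▸ Nat.findGreatest_le _,
    Nat.findGreatest_spec (P := fun i => w.getD i 0 = i + 1) (Nat.zero_le _) htight0,
    fun i hi hin => ?_⟩
  have := hw.getD_bounds (i := i) (by omega)
  have := Nat.findGreatest_is_greatest hi (hlen ▸ hin)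
  omega

theorem IsPQR.take {n a : ℕ} {w : List ℕ} {B : Finset ℕ} (h : IsPQR n w B) (ha : a ≤ n) :
    IsPQR a (w.take a) (B.filter (· + 1 < a)) := by
  have hlen : (w.take a).length = a := by simp [h.1.1, ha]
  refine ⟨⟨hlen, h.1.2.1.sublist (List.take_sublist _ _), fun i hi => ?_⟩, fun i hi => ?_⟩
  · rw [List.getD_take_of_lt (hlen ▸ hi)]
    exact h.1.getD_bounds (by omega)
  · obtain ⟨hiB, hia⟩ := Finset.mem_filter.1 hi
    rw [hlen, List.getD_take_of_lt (by omega), List.getD_take_of_lt hia]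
    exact ⟨hia, (h.2 i hiB).2⟩

theorem IsLastTight.le_getD {n a : ℕ} {w : List ℕ} (hw : IsNDPF (n + 1) w)
    (ha : IsLastTight n w a) {i : ℕ} (hai : a ≤ i) (hin : i ≤ n) : a + 1 ≤ w.getD i 0 :=
  ha.2.1 ▸ hw.getD_mono hai (by omega)

theorem IsPQR.map_sub_drop {n a : ℕ} {w : List ℕ} {B : Finset ℕ} (h : IsPQR (n + 1) w B)
    (ha : IsLastTight n w a) :
    IsPQR (n - a) ((w.drop (a + 1)).map (· - a)) ((B.filter (a < ·)).image (· - (a + 1))) := by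
  have hlen : ((w.drop (a + 1)).map (· - a)).length = n - a := by simp [h.1.1]
  have hget (j : ℕ) : ((w.drop (a + 1)).map (· - a)).getD j 0 = w.getD (a + 1 + j) 0 - a := by
    rw [List.getD_map_sub, List.getD_drop]
  refine ⟨⟨hlen, (h.1.2.1.sublist (List.drop_sublist _ _)).map _ fun x y hxy => by omega,
    fun j hj => ?_⟩, fun j hj => ?_⟩
  · rw [hlen] at hj
    have := ha.le_getD h.1 (i := a + 1 + j) (by omega) (by omega)
    have := ha.2.2 (a + 1 + j) (by omega) (by omega)
    rw [hget]
    omega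
  · obtain ⟨i, hi, rfl⟩ := Finset.mem_image.1 hj
    obtain ⟨hiB, hai⟩ := Finset.mem_filter.1 hi
    obtain ⟨hin, hlt⟩ := h.2 i hiB
    rw [h.1.1] at hin
    have := ha.le_getD h.1 (i := i) (by omega) (by omega)
    rw [hlen, hget, hget, show a + 1 + (i - (a + 1)) = i by omega,
      show a + 1 + (i - (a + 1) + 1) = i + 1 by omega]
    omega

theorem wordJoin_take_drop {n a : ℕ} {w : List ℕ} (hw : IsNDPF (n + 1) w)
    (ha : IsLastTight n w a) : wordJoin (w.take a) ((w.drop (a + 1)).map (· - a)) = w := by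
  have hlen : (w.take a).length = a := by simp [hw.1]; have := ha.1; omega
  have hwa : w[a]'(by rw [hw.1]; have := ha.1; omega) = a + 1 := by
    rw [← List.getD_eq_getElem _ 0]
    exact ha.2.1
  have hdrop : ((w.drop (a + 1)).map (· - a)).map (· + a) = w.drop (a + 1) := by
    rw [List.map_map]
    refine (List.map_congr_left fun x hx => ?_).trans (List.map_id _)
    obtain ⟨j, hj, rfl⟩ := List.mem_iff_getElem.1 hx
    rw [List.length_drop, hw.1] at hj
    have := ha.le_getD hw (i := a + 1 + j) (by omega) (by omega)
    rw [List.getD_eq_getElem _ _ (by rw [hw.1]; omega)] at this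
    simp only [List.getElem_drop, Function.comp_apply, id_eq]
    omega
  rw [wordJoin, hlen, hdrop]
  conv_rhs =>
    rw [← List.take_append_drop a w, List.drop_eq_getElem_cons (by rw [hw.1]; have := ha.1; omega),
      hwa]

theorem IsLastTight.notMem {n a : ℕ} {w : List ℕ} {B : Finset ℕ} (h : IsPQR (n + 1) w B)
    (ha : IsLastTight n w a) : a ∉ B := by
  intro haB
  obtain ⟨hlen, hlt⟩ := h.2 a haB
  have := ha.2.2 (a + 1) (by omega) (by rw [h.1.1] at hlen; omega)
  have := ha.2.1
  omega

theorem barJoin_filter {n a : ℕ} {w : List ℕ} {B : Finset ℕ} (h : IsPQR (n + 1) w B)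
    (ha : IsLastTight n w a) :
    barJoin a (B.filter (· + 1 < a)) ((B.filter (a < ·)).image (· - (a + 1)))
      (decide (1 ≤ a ∧ a - 1 ∈ B)) = B := by
  ext i
  simp only [barJoin, Finset.mem_union, Finset.mem_filter, Finset.mem_image]
  constructor
  · rintro ((⟨hi, -⟩ | hi) | ⟨j, ⟨i', ⟨hi', hai'⟩, rfl⟩, rfl⟩)
    · exact hi
    · split_ifs at hi with hflag
      · rw [Finset.mem_singleton.1 hi]
        exact (of_decide_eq_true hflag).2
      · simp at hi
    · rwa [Nat.sub_add_cancel (by omega)]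
  · intro hi
    rcases lt_trichotomy (i + 1) a with hia | rfl | hia
    · exact Or.inl (Or.inl ⟨hi, hia⟩)
    · exact Or.inl (Or.inr (by simp [hi]))
    · have : i ≠ a := by rintro rfl; exact ha.notMem h hi
      exact Or.inr ⟨i - (a + 1), ⟨i, ⟨hi, by omega⟩, rfl⟩, by omega⟩

theorem pqrJoin_pqrSplit {n : ℕ} {z : List ℕ × Finset ℕ} (hz : IsPQR (n + 1) z.1 z.2) :
    pqrJoin (pqrSplit z).1 (pqrSplit z).2.1 (pqrSplit z).2.2 = z := by
  have ha := isLastTight_lastTight hz.1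
  have hlen : (z.1.take (lastTight z.1)).length = lastTight z.1 := by
    simp [hz.1.1]; have := ha.1; omega
  refine Prod.ext (wordJoin_take_drop hz.1 ha) ?_
  simp only [pqrJoin, pqrSplit, pqrSplitAt, hlen]
  exact barJoin_filter hz ha

theorem isPQR_zero_iff {p : List ℕ × Finset ℕ} : IsPQR 0 p.1 p.2 ↔ p = ([], ∅) := by
  constructor
  · rintro ⟨⟨hw, -⟩, hB⟩
    rw [List.length_eq_zero_iff] at hw
    refine Prod.ext hw (Finset.eq_empty_of_forall_notMem fun i hi => ?_)
    simpa [hw] using (hB i hi).1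
  · rintro rfl
    exact ⟨⟨rfl, List.Pairwise.nil, by simp⟩, by simp⟩

theorem card_pqr_zero : Nat.card {p : List ℕ × Finset ℕ // IsPQR 0 p.1 p.2} = 1 := by
  simp [isPQR_zero_iff]

theorem isJoinDecomposition_pqrJoin :
    IsJoinDecomposition (fun n p => IsPQR n p.1 p.2) (fun i _ f => f = true → 1 ≤ i) pqrJoin where
  grade_unique h h' := h.1.1.symm.trans h'.1.1
  mem_join hp hq hf := isPQR_join hp hq hf
  join_inj hp hq hf hp' hq' hf' h := by
    simpa [pqrSplit_join hp hq hf, pqrSplit_join hp' hq' hf'] using congrArg pqrSplit h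
  exists_join {n z} hz := by
    have ha := isLastTight_lastTight hz.1
    refine ⟨_, _, (pqrSplit z).1, (pqrSplit z).2.1, (pqrSplit z).2.2, Nat.add_sub_cancel' ha.1,
      hz.take (by have := ha.1; omega), hz.map_sub_drop ha, fun h => (of_decide_eq_true h).1,
      pqrJoin_pqrSplit hz⟩

/-- **Parking quasi-ribbons are counted by the little Schröder numbers.** The number of
parking quasi-ribbons of size `n` equals the number of Schröder trees with `n+1` leaves. -/
theorem card_pqr_eq_card_schroeder_trees (n : ℕ) :
    Nat.card {p : List ℕ × Finset ℕ // IsPQR n p.1 p.2} =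
      Nat.card {t : STree // leavesT t = n + 1} := by
  have : Finite {p : List ℕ × Finset ℕ // IsPQR 0 p.1 p.2} :=
    Nat.finite_of_card_ne_zero (by simp [card_pqr_zero])
  have : Finite {t // leavesT t = 0 + 1} :=
    Nat.finite_of_card_ne_zero (by simp [STree.card_leavesT_eq_one])
  induction n using Nat.strong_induction_on with
  | _ n ih =>
    cases n with
    | zero => rw [card_pqr_zero, STree.card_leavesT_eq_one]
    | succ n =>
      rw [isJoinDecomposition_pqrJoin.card_succ, STree.isJoinDecomposition.card_succ,
        ← Nat.sum_antidiagonal_swap]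
      refine sum_congr rfl fun x hx => ?_
      have := mem_antidiagonal.1 hx
      simp only [Prod.fst_swap, Prod.snd_swap, ih x.1 (by omega), ih x.2 (by omega)]
      ring
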